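/- The polynomial ζ_2 := F_4(ζ_1) equals x_2·(−x_13 + x_14) + 3x_1x_15 − 3x_3x_11 + 3x_4x_9 − 3x_6x_7, and moreover x_1·ζ_2 − x_2·ζ_1 = 3ϑ. -/
import Mathlib


open MvPolynomial

noncomputable section

/-- The polynomial algebra `A = ℂ[x_1, …, x_26]`. -/
abbrev A : Type := MvPolynomial (Fin 26) ℂ

/-- The variable `x_r` (1-indexed), `0` out of range. -/
def x (r : ℕ) : A :=
  if h : 1 ≤ r ∧ r ≤ 26 then X (⟨r - 1, by omega⟩ : Fin 26) else 0

/-- The partial derivative `∂_r` (1-indexed), `0` out of range. -/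
def d (r : ℕ) (f : A) : A :=
  if h : 1 ≤ r ∧ r ≤ 26 then pderiv (⟨r - 1, by omega⟩ : Fin 26) f else 0

/-- Simple positive root vector actions. -/
def E1 (f : A) : A :=
  x 4 * d 6 f + x 5 * d 8 f + x 7 * d 9 f - x 18 * d 20 f - x 19 * d 22 f - x 21 * d 23 f

def E2 (f : A) : A :=
  x 3 * d 4 f + x 8 * d 10 f + x 9 * d 11 f - x 16 * d 18 f - x 17 * d 19 f - x 23 * d 24 f

def E3 (f : A) : A :=
  -x 2 * d 3 f - x 4 * d 5 f - x 6 * d 8 f + x 10 * d 12 f + x 11 * (d 13 f - 2 * d 14 f)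
    - x 14 * d 16 f - x 15 * d 17 f + x 19 * d 21 f + x 22 * d 23 f + x 24 * d 25 f

def E4 (f : A) : A :=
  -x 1 * d 2 f - x 5 * d 7 f - x 8 * d 9 f - x 10 * d 11 f + x 12 * (d 14 f - 2 * d 13 f)
    - x 13 * d 15 f + x 16 * d 17 f + x 18 * d 19 f + x 20 * d 22 f + x 25 * d 26 f

/-- Simple negative root vector actions. -/
def F1 (f : A) : A :=
  -x 6 * d 4 f - x 8 * d 5 f - x 9 * d 7 f + x 20 * d 18 f + x 22 * d 19 f + x 23 * d 21 f

def F2 (f : A) : A :=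
  -x 4 * d 3 f - x 10 * d 8 f - x 11 * d 9 f + x 18 * d 16 f + x 19 * d 17 f + x 24 * d 23 f

def F3 (f : A) : A :=
  x 3 * d 2 f + x 5 * d 4 f + x 8 * d 6 f - x 12 * d 10 f + x 14 * d 11 f
    + x 16 * (2 * d 14 f - d 13 f) + x 17 * d 15 f - x 21 * d 19 f - x 23 * d 22 f
    - x 25 * d 24 f

def F4 (f : A) : A :=
  x 2 * d 1 f + x 7 * d 5 f + x 9 * d 8 f + x 11 * d 10 f + x 13 * d 12 f
    + x 15 * (2 * d 13 f - d 14 f) - x 17 * d 16 f - x 19 * d 18 f - x 22 * d 20 f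
    - x 26 * d 25 f

/-- Cartan subalgebra basis actions. -/
def H1 (f : A) : A :=
  x 4 * d 4 f + x 5 * d 5 f - x 6 * d 6 f + x 7 * d 7 f - x 8 * d 8 f - x 9 * d 9 f
    + x 18 * d 18 f + x 19 * d 19 f - x 20 * d 20 f + x 21 * d 21 f - x 22 * d 22 f
    - x 23 * d 23 f

def H2 (f : A) : A :=
  x 3 * d 3 f - x 4 * d 4 f + x 8 * d 8 f + x 9 * d 9 f - x 10 * d 10 f - x 11 * d 11 f
    + x 16 * d 16 f + x 17 * d 17 f - x 18 * d 18 f - x 19 * d 19 f + x 23 * d 23 f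
    - x 24 * d 24 f

def H3 (f : A) : A :=
  x 2 * d 2 f - x 3 * d 3 f + x 4 * d 4 f - x 5 * d 5 f + x 6 * d 6 f - x 8 * d 8 f
    + x 10 * d 10 f + 2 * x 11 * d 11 f - x 12 * d 12 f + x 15 * d 15 f
    - 2 * x 16 * d 16 f - x 17 * d 17 f + x 19 * d 19 f - x 21 * d 21 f + x 22 * d 22 f
    - x 23 * d 23 f + x 24 * d 24 f - x 25 * d 25 f

def H4 (f : A) : A :=
  x 1 * d 1 f - x 2 * d 2 f + x 5 * d 5 f - x 7 * d 7 f + x 8 * d 8 f - x 9 * d 9 f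
    + x 10 * d 10 f - x 11 * d 11 f + 2 * x 12 * d 12 f - 2 * x 15 * d 15 f
    + x 16 * d 16 f - x 17 * d 17 f + x 18 * d 18 f - x 19 * d 19 f + x 20 * d 20 f
    - x 22 * d 22 f + x 25 * d 25 f - x 26 * d 26 f

/-- The singular vector `ζ_1`. -/
def zeta1 : A :=
  x 1 * (2 * x 13 + x 14) - 3 * x 2 * x 12 - 3 * x 3 * x 10 + 3 * x 4 * x 8
    - 3 * x 5 * x 6

/-- The singular vector `ϑ`. -/
def theta : A :=
  x 1 * (-(x 2 * x 13) + x 1 * x 15 - x 3 * x 11 + x 4 * x 9 - x 6 * x 7)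
    + x 2 * (x 2 * x 12 + x 3 * x 10 - x 4 * x 8 + x 5 * x 6)

/-- The quadratic invariant `η_1`. -/
def eta1 : A :=
  3 * ∑ r ∈ Finset.Icc 1 12, x r * x (27 - r) - x 13 ^ 2 - x 13 * x 14 - x 14 ^ 2

def zeta2 : A := F4 zeta1
def zeta3 : A := F3 zeta2
def zeta4 : A := -F2 zeta3
def zeta5 : A := F3 zeta4
def zeta6 : A := -F1 zeta4
def zeta7 : A := F4 zeta5
def zeta8 : A := -F1 zeta5
def zeta9 : A := -F1 zeta7
def zeta10 : A := -F2 zeta8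
def zeta11 : A := -F2 zeta9
def zeta12 : A := -F3 zeta10
def zeta13 : A := F4 zeta12
def zeta14 : A := F3 zeta11

/-- The algebra automorphism `τ` with `τ(x_r) = x_{27-r}` for `r ∉ {13,14}`,
`τ(x_13) = -x_13`, `τ(x_14) = -x_14` (0-indexed internally). -/
def tau : A →ₐ[ℂ] A :=
  aeval (fun i : Fin 26 =>
    if i.val = 12 then -X (⟨12, by omega⟩ : Fin 26)
    else if i.val = 13 then -X (⟨13, by omega⟩ : Fin 26)
    else X (⟨25 - i.val, by omega⟩ : Fin 26))

/-- The family `ζ_r`, `1 ≤ r ≤ 26` (`0` out of range). -/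
def zeta : ℕ → A := fun r =>
  match r with
  | 1 => zeta1 | 2 => zeta2 | 3 => zeta3 | 4 => zeta4 | 5 => zeta5 | 6 => zeta6
  | 7 => zeta7 | 8 => zeta8 | 9 => zeta9 | 10 => zeta10 | 11 => zeta11
  | 12 => zeta12 | 13 => zeta13 | 14 => zeta14
  | 15 => tau zeta12 | 16 => tau zeta11 | 17 => tau zeta10 | 18 => tau zeta9
  | 19 => tau zeta8 | 20 => tau zeta7 | 21 => tau zeta6 | 22 => tau zeta5
  | 23 => tau zeta4 | 24 => tau zeta3 | 25 => tau zeta2 | 26 => tau zeta1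
  | _ => 0

/-- The cubic invariant `η_2`. -/
def eta2 : A :=
  3 * ∑ r ∈ Finset.Icc 1 12, (zeta r * x (27 - r) + x r * zeta (27 - r))
    - 2 * x 13 * zeta 13 - x 13 * zeta 14 - x 14 * zeta 13 - 2 * x 14 * zeta 14

/-- The `F_4`-invariant Laplace operator `Δ`. -/
def Lap (f : A) : A :=
  3 * ∑ r ∈ Finset.Icc 1 12, d r (d (27 - r) f) - d 13 (d 13 f) - d 13 (d 14 f)
    - d 14 (d 14 f)

lemma pderiv_ofNat'' (i : Fin 26) (n : ℕ) [n.AtLeastTwo] :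
    pderiv i (no_index (OfNat.ofNat n) : A) = 0 := by
  have h : (OfNat.ofNat n : A) = ((n : ℕ) : A) := by norm_cast
  rw [h, Derivation.map_natCast]

set_option maxHeartbeats 2000000 in
/-- explicit form of `ζ_2 = F_4(ζ_1)`, and `x_1 ζ_2 - x_2 ζ_1 = 3ϑ`. -/
theorem stmt9 :
    zeta2 = x 2 * (-x 13 + x 14) + 3 * x 1 * x 15 - 3 * x 3 * x 11 + 3 * x 4 * x 9
        - 3 * x 6 * x 7 ∧
    x 1 * zeta2 - x 2 * zeta1 = 3 * theta := by
  have h1 : zeta2 = x 2 * (-x 13 + x 14) + 3 * x 1 * x 15 - 3 * x 3 * x 11 + 3 * x 4 * x 9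
      - 3 * x 6 * x 7 := by
    show F4 zeta1 = _
    simp only [F4, zeta1, x, d]
    norm_num [pderiv_mul, pderiv_X, pderiv_ofNat'', Pi.single_apply, Fin.ext_iff]
    ring
  exact ⟨h1, by rw [h1]; simp only [zeta1, theta, x]; norm_num; ring⟩
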